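/- If C is a free E-linear code, then SHull(C) = C ∩ C^{⊥_S} is also a free E-linear code, and LSHull(C) = SHull(C). -/
import Mathlib


open Finset

/-- The non-unital ring `E`, realized as pairs `(u, v) ∈ F₂ × F₂`
representing `uκ + vζ`. -/
def Ering : Type := (ZMod 2) × (ZMod 2)

namespace Ering

instance : AddCommGroup Ering := inferInstanceAs (AddCommGroup ((ZMod 2) × (ZMod 2)))
instance : DecidableEq Ering := inferInstanceAs (DecidableEq ((ZMod 2) × (ZMod 2)))
instance : Fintype Ering := inferInstanceAs (Fintype ((ZMod 2) × (ZMod 2)))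

instance : Mul Ering := ⟨fun a b => (a.1 * b.1, a.2 * b.1)⟩

instance : NonUnitalRing Ering :=
  { (inferInstance : AddCommGroup Ering), (inferInstance : Mul Ering) with
    left_distrib := by decide
    right_distrib := by decide
    zero_mul := by decide
    mul_zero := by decide
    mul_assoc := by decide }

/-- The generator κ. -/
def kappa : Ering := ((1 : ZMod 2), (0 : ZMod 2))
/-- The generator τ. -/
def tau : Ering := ((1 : ZMod 2), (1 : ZMod 2))
/-- ζ = κ + τ. -/
def zeta : Ering := ((0 : ZMod 2), (1 : ZMod 2))

/-- The scalar action of `F₂` on `E`: `u • e = e` if `u = 1`, else `0`. -/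
def fsmul (u : ZMod 2) (e : Ering) : Ering := if u = 1 then e else 0

/-- `E`-vectors of length `2n`, written as a pair `(u | v)` of halves of length `n`. -/
abbrev VE (n : ℕ) := (Fin n → Ering) × (Fin n → Ering)

/-- `F₂`-vectors of length `2n`, written as a pair of halves of length `n`. -/
abbrev VF (n : ℕ) := (Fin n → ZMod 2) × (Fin n → ZMod 2)

/-- Symplectic inner product on `E^{2n}`: `⟨(u|v),(u'|v')⟩ₛ = ⟨u,v'⟩ + ⟨v,u'⟩`. -/
def sympE {n : ℕ} (x y : VE n) : Ering := ∑ i, x.1 i * y.2 i + ∑ i, x.2 i * y.1 i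

/-- Symplectic inner product on `F₂^{2n}`. -/
def sympF {n : ℕ} (x y : VF n) : ZMod 2 := ∑ i, x.1 i * y.2 i + ∑ i, x.2 i * y.1 i

/-- An `E`-linear code: a left `E`-submodule of `E^{2n}`. -/
def IsLinearCode {n : ℕ} (C : Set (VE n)) : Prop :=
  (0 : VE n) ∈ C ∧ (∀ x ∈ C, ∀ y ∈ C, x + y ∈ C) ∧
    (∀ e : Ering, ∀ x ∈ C, ((fun i => e * x.1 i, fun i => e * x.2 i) : VE n) ∈ C)

/-- Componentwise reduction `π : E^{2n} → F₂^{2n}`, `π(uκ + vζ) = u`. -/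
def resVec {n : ℕ} (x : VE n) : VF n := (fun i => (x.1 i).1, fun i => (x.2 i).1)

/-- For `e ∈ E` and `v ∈ F₂^{2n}`, the vector `ev ∈ E^{2n}` with entries `vᵢ • e`. -/
def evec {n : ℕ} (e : Ering) (v : VF n) : VE n :=
  (fun i => fsmul (v.1 i) e, fun i => fsmul (v.2 i) e)

/-- The residue code `C_Res = π(C)`. -/
def resCode {n : ℕ} (C : Set (VE n)) : Set (VF n) := resVec '' C

/-- The torsion code `C_Tor = {v : ζv ∈ C}`. -/
def torCode {n : ℕ} (C : Set (VE n)) : Set (VF n) := {v | evec zeta v ∈ C}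

/-- The left symplectic dual. -/
def leftDual {n : ℕ} (C : Set (VE n)) : Set (VE n) := {z | ∀ w ∈ C, sympE z w = 0}

/-- The right symplectic dual. -/
def rightDual {n : ℕ} (C : Set (VE n)) : Set (VE n) := {z | ∀ w ∈ C, sympE w z = 0}

/-- The two-sided symplectic dual. -/
def dual {n : ℕ} (C : Set (VE n)) : Set (VE n) := leftDual C ∩ rightDual C

/-- The binary symplectic dual of `D ⊆ F₂^{2n}`. -/
def dualF {n : ℕ} (D : Set (VF n)) : Set (VF n) := {z | ∀ w ∈ D, sympF z w = 0}

/-- The two-sided symplectic hull. -/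
def SHull {n : ℕ} (C : Set (VE n)) : Set (VE n) := C ∩ dual C

/-- The left symplectic hull. -/
def LSHull {n : ℕ} (C : Set (VE n)) : Set (VE n) := C ∩ leftDual C

/-- The right symplectic hull. -/
def RSHull {n : ℕ} (C : Set (VE n)) : Set (VE n) := C ∩ rightDual C

/-- Symplectic hull of a binary code. -/
def SHullF {n : ℕ} (D : Set (VF n)) : Set (VF n) := D ∩ dualF D

/-- A free `E`-linear code: residue and torsion codes coincide. -/
def IsFree {n : ℕ} (C : Set (VE n)) : Prop := resCode C = torCode C

end Ering

namespace Ering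

/-- Second-component (torsion part) vector. -/
def secVec {n : ℕ} (x : VE n) : VF n := (fun i => (x.1 i).2, fun i => (x.2 i).2)

lemma efst_add : ∀ a b : Ering, (a + b).1 = a.1 + b.1 := fun _ _ => rfl
lemma esnd_add : ∀ a b : Ering, (a + b).2 = a.2 + b.2 := fun _ _ => rfl
lemma efst_mul : ∀ a b : Ering, (a * b).1 = a.1 * b.1 := fun _ _ => rfl
lemma esnd_mul : ∀ a b : Ering, (a * b).2 = a.2 * b.1 := fun _ _ => rfl

lemma efst_sum {α : Type*} (s : Finset α) (f : α → Ering) :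
    (∑ i ∈ s, f i).1 = ∑ i ∈ s, (f i).1 := by
  induction s using Finset.cons_induction with
  | empty => rfl
  | cons a s ha ih => rw [Finset.sum_cons, Finset.sum_cons, efst_add, ih]

lemma esnd_sum {α : Type*} (s : Finset α) (f : α → Ering) :
    (∑ i ∈ s, f i).2 = ∑ i ∈ s, (f i).2 := by
  induction s using Finset.cons_induction with
  | empty => rfl
  | cons a s ha ih => rw [Finset.sum_cons, Finset.sum_cons, esnd_add, ih]

lemma eq_zero_iff : ∀ e : Ering, e = 0 ↔ e.1 = 0 ∧ e.2 = 0 := by decide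

lemma sympE_fst {n : ℕ} (x y : VE n) :
    (sympE x y).1 = sympF (resVec x) (resVec y) := by
  simp [sympE, sympF, resVec, efst_add, efst_sum, efst_mul]

lemma sympE_snd {n : ℕ} (x y : VE n) :
    (sympE x y).2 = sympF (secVec x) (resVec y) := by
  simp [sympE, sympF, resVec, secVec, esnd_add, esnd_sum, esnd_mul]

lemma sympE_eq_zero {n : ℕ} (x y : VE n) :
    sympE x y = 0 ↔ sympF (resVec x) (resVec y) = 0 ∧ sympF (secVec x) (resVec y) = 0 := by
  rw [eq_zero_iff, sympE_fst, sympE_snd]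

lemma sympF_comm {n : ℕ} (x y : VF n) : sympF x y = sympF y x := by
  unfold sympF
  rw [add_comm]
  congr 1 <;> exact Finset.sum_congr rfl fun i _ => mul_comm _ _

lemma sympF_zero_left {n : ℕ} (y : VF n) : sympF 0 y = 0 := by
  simp [sympF]

lemma kappa_mul : ∀ e : Ering, kappa * e = fsmul e.1 kappa := by decide
lemma zeta_mul : ∀ e : Ering, zeta * e = fsmul e.1 zeta := by decide
lemma add_kappa_mul : ∀ e : Ering, e + kappa * e = fsmul e.2 zeta := by decide
lemma fsmul_kappa_fst : ∀ u : ZMod 2, (fsmul u kappa).1 = u := by decide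
lemma fsmul_kappa_snd : ∀ u : ZMod 2, (fsmul u kappa).2 = 0 := by decide
lemma fsmul_zeta_fst : ∀ u : ZMod 2, (fsmul u zeta).1 = 0 := by decide
lemma fsmul_zeta_snd : ∀ u : ZMod 2, (fsmul u zeta).2 = u := by decide

lemma kappa_smul {n : ℕ} (x : VE n) :
    ((fun i => kappa * x.1 i, fun i => kappa * x.2 i) : VE n) = evec kappa (resVec x) :=
  Prod.ext (funext fun i => kappa_mul _) (funext fun i => kappa_mul _)

lemma zeta_smul {n : ℕ} (x : VE n) :
    ((fun i => zeta * x.1 i, fun i => zeta * x.2 i) : VE n) = evec zeta (resVec x) :=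
  Prod.ext (funext fun i => zeta_mul _) (funext fun i => zeta_mul _)

lemma add_kappa_smul {n : ℕ} (x : VE n) :
    x + ((fun i => kappa * x.1 i, fun i => kappa * x.2 i) : VE n) = evec zeta (secVec x) :=
  Prod.ext (funext fun i => add_kappa_mul _) (funext fun i => add_kappa_mul _)

lemma resVec_evec_kappa {n : ℕ} (v : VF n) : resVec (evec kappa v) = v :=
  Prod.ext (funext fun i => fsmul_kappa_fst _) (funext fun i => fsmul_kappa_fst _)

lemma secVec_evec_kappa {n : ℕ} (v : VF n) : secVec (evec kappa v) = 0 :=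
  Prod.ext (funext fun i => fsmul_kappa_snd _) (funext fun i => fsmul_kappa_snd _)

lemma resVec_evec_zeta {n : ℕ} (v : VF n) : resVec (evec zeta v) = 0 :=
  Prod.ext (funext fun i => fsmul_zeta_fst _) (funext fun i => fsmul_zeta_fst _)

lemma secVec_evec_zeta {n : ℕ} (v : VF n) : secVec (evec zeta v) = v :=
  Prod.ext (funext fun i => fsmul_zeta_snd _) (funext fun i => fsmul_zeta_snd _)

lemma res_mem_tor {n : ℕ} {C : Set (VE n)} (hC : IsLinearCode C) {x : VE n}
    (hx : x ∈ C) : resVec x ∈ torCode C := by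
  show evec zeta (resVec x) ∈ C
  rw [← zeta_smul]
  exact hC.2.2 zeta x hx

lemma sec_mem_tor {n : ℕ} {C : Set (VE n)} (hC : IsLinearCode C) {x : VE n}
    (hx : x ∈ C) : secVec x ∈ torCode C := by
  show evec zeta (secVec x) ∈ C
  rw [← add_kappa_smul]
  exact hC.2.1 x hx _ (hC.2.2 kappa x hx)

end Ering

open Ering
/-- if `C` is free, then `SHull C` is free and `LSHull C = SHull C`. -/
theorem Ering.shull_free {n : ℕ} (C : Set (VE n)) (hC : IsLinearCode C)
    (hfree : IsFree C) : IsFree (SHull C) ∧ LSHull C = SHull C := by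
  have hL : ∀ z : VE n, z ∈ leftDual C ↔
      resVec z ∈ dualF (resCode C) ∧ secVec z ∈ dualF (resCode C) := by
    intro z
    constructor
    · intro hz
      constructor
      · rintro w ⟨x, hx, rfl⟩; exact ((sympE_eq_zero z x).1 (hz x hx)).1
      · rintro w ⟨x, hx, rfl⟩; exact ((sympE_eq_zero z x).1 (hz x hx)).2
    · rintro ⟨h1, h2⟩ w hw
      exact (sympE_eq_zero z w).2 ⟨h1 _ ⟨w, hw, rfl⟩, h2 _ ⟨w, hw, rfl⟩⟩
  have hR : ∀ z : VE n, resVec z ∈ dualF (resCode C) → z ∈ rightDual C := by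
    intro z hz w hw
    refine (sympE_eq_zero w z).2 ⟨?_, ?_⟩
    · rw [sympF_comm]; exact hz _ ⟨w, hw, rfl⟩
    · rw [sympF_comm]
      have hsec : secVec w ∈ resCode C := by
        rw [hfree]; exact sec_mem_tor hC hw
      exact hz _ hsec
  have h0dual : (0 : VF n) ∈ dualF (resCode C) := fun w _ => sympF_zero_left w
  have hLR : LSHull C = SHull C := by
    apply Set.Subset.antisymm
    · rintro z ⟨hzC, hzL⟩
      exact ⟨hzC, hzL, hR z ((hL z).1 hzL).1⟩
    · rintro z ⟨hzC, hzL, _⟩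
      exact ⟨hzC, hzL⟩
  refine ⟨?_, hLR⟩
  show resCode (SHull C) = torCode (SHull C)
  ext v
  constructor
  · rintro ⟨x, ⟨hxC, hxL, hxR⟩, rfl⟩
    show evec zeta (resVec x) ∈ SHull C
    have h1 : resVec x ∈ resCode C := ⟨x, hxC, rfl⟩
    have h2 : resVec x ∈ dualF (resCode C) := ((hL x).1 hxL).1
    have hmemC : evec zeta (resVec x) ∈ C := by
      have := res_mem_tor hC hxC
      exact this
    refine ⟨hmemC, (hL _).2 ⟨?_, ?_⟩, hR _ ?_⟩
    · rw [resVec_evec_zeta]; exact h0dual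
    · rw [secVec_evec_zeta]; exact h2
    · rw [resVec_evec_zeta]; exact h0dual
  · intro hv
    obtain ⟨hvC, hvL, hvR⟩ : evec zeta v ∈ SHull C := hv
    have hvtor : v ∈ torCode C := hvC
    have hvres : v ∈ resCode C := by rw [hfree]; exact hvtor
    have hvdual : v ∈ dualF (resCode C) := by
      have := ((hL _).1 hvL).2
      rwa [secVec_evec_zeta] at this
    obtain ⟨x, hxC, hxv⟩ := hvres
    have hmemC : evec kappa v ∈ C := by
      rw [← hxv, ← kappa_smul]
      exact hC.2.2 kappa x hxC
    refine ⟨evec kappa v, ⟨hmemC, (hL _).2 ⟨?_, ?_⟩, hR _ ?_⟩, resVec_evec_kappa v⟩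
    · rw [resVec_evec_kappa]; exact hvdual
    · rw [secVec_evec_kappa]; exact h0dual
    · rw [resVec_evec_kappa]; exact hvdual
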